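/- Generic recurrence relation for the C-orbit functions of B_3 (multiplication by u₃): For positive integers k, l, m let λ(k,l,m) = (k+l+m/2, l+m/2, m/2) ∈ ℝ³ and define C_{(k,l,m)}(x) = 8 Σ_{σ∈S₃} cos(2π λ(k,l,m)_{σ(1)} x₁)·cos(2π λ(k,l,m)_{σ(2)} x₂)·cos(2π λ(k,l,m)_{σ(3)} x₃) for x ∈ ℝ³. Then for all integers k, l, m ≥ 2: 8 cos(πx₁)cos(πx₂)cos(πx₃) · C_{(k,l,m)}(x) = C_{(k,l,m+1)}(x) + C_{(k+1,l−1,m+1)}(x) + C_{(k,l−1,m+1)}(x) + C_{(k−1,l,m+1)}(x) + C_{(k−1,l+1,m−1)}(x) + C_{(k,l+1,m−1)}(x) + C_{(k+1,l,m−1)}(x) + C_{(k,l,m−1)}(x). -/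
import Mathlib


open Real

/-- Coordinates of the strictly dominant weight `kω₁+lω₂+mω₃` of `B₃` in the
orthonormal basis: `λ(k,l,m) = (k+l+m/2, l+m/2, m/2)`. -/
noncomputable def lamB3 (k l m : ℕ) : Fin 3 → ℝ :=
  ![(k : ℝ) + l + m / 2, (l : ℝ) + m / 2, (m : ℝ) / 2]

/-- The `C`-orbit function `C_{(k,l,m)}` of `B₃` in orthonormal coordinates:
`C_{(k,l,m)}(x) = 8 Σ_{σ∈S₃} Π_i cos(2π λ_{σ(i)} x_i)`. -/
noncomputable def CB3 (k l m : ℕ) (x : Fin 3 → ℝ) : ℝ :=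
  8 * ∑ σ : Equiv.Perm (Fin 3), ∏ i : Fin 3, cos (2 * π * lamB3 k l m (σ i) * x i)

/-- Auxiliary symmetric sum: `Σ_{σ∈S₃} cos(σ(a,b,c)₁ u) cos(σ(a,b,c)₂ v) cos(σ(a,b,c)₃ w)`. -/
noncomputable def S3aux (a b c u v w : ℝ) : ℝ :=
  cos (a*u)*cos (b*v)*cos (c*w) + cos (b*u)*cos (a*v)*cos (c*w) + cos (c*u)*cos (b*v)*cos (a*w)
  + cos (a*u)*cos (c*v)*cos (b*w) + cos (c*u)*cos (a*v)*cos (b*w) + cos (b*u)*cos (c*v)*cos (a*w)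

lemma CB3_expand (k l m : ℕ) (x : Fin 3 → ℝ) :
    CB3 k l m x = 8 * S3aux (2*π*((k:ℝ)+l+m/2)) (2*π*((l:ℝ)+m/2)) (2*π*((m:ℝ)/2))
      (x 0) (x 1) (x 2) := by
  simp only [CB3, lamB3]
  rw [show (Finset.univ : Finset (Equiv.Perm (Fin 3))) =
    {1, Equiv.swap 0 1, Equiv.swap 0 2, Equiv.swap 1 2,
     (Equiv.swap 0 1) * (Equiv.swap 0 2), (Equiv.swap 0 2) * (Equiv.swap 0 1)} from by decide]
  rw [Finset.sum_insert (by decide), Finset.sum_insert (by decide), Finset.sum_insert (by decide),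
      Finset.sum_insert (by decide), Finset.sum_insert (by decide), Finset.sum_singleton]
  simp [S3aux, Fin.prod_univ_three, Equiv.swap_apply_def, Equiv.Perm.mul_apply,
        Matrix.cons_val_zero, Matrix.cons_val_one, Matrix.head_cons]
  ring

/-- The key product-to-sum identity: multiplying the symmetric cosine sum by
`8 cos(tu) cos(tv) cos(tw)` shifts each weight coordinate by `±t`. -/
lemma key_S3aux (a b c t u v w : ℝ) :
    8 * cos (t*u) * cos (t*v) * cos (t*w) * (8 * S3aux a b c u v w) =
      8 * S3aux (a+t) (b+t) (c+t) u v w + 8 * S3aux (a+t) (b-t) (c+t) u v w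
      + 8 * S3aux (a-t) (b-t) (c+t) u v w + 8 * S3aux (a-t) (b+t) (c+t) u v w
      + 8 * S3aux (a-t) (b+t) (c-t) u v w + 8 * S3aux (a+t) (b+t) (c-t) u v w
      + 8 * S3aux (a+t) (b-t) (c-t) u v w + 8 * S3aux (a-t) (b-t) (c-t) u v w := by
  simp only [S3aux, add_mul, sub_mul, cos_add, cos_sub]
  ring

/-- Generic recurrence relation for the `C`-orbit functions of `B₃`
(multiplication by `u₃ = 8 cos πx₁ cos πx₂ cos πx₃`), valid for `k, l, m ≥ 2`. -/
theorem CB3_recurrence (k l m : ℕ) (hk : 2 ≤ k) (hl : 2 ≤ l) (hm : 2 ≤ m) (x : Fin 3 → ℝ) :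
    8 * cos (π * x 0) * cos (π * x 1) * cos (π * x 2) * CB3 k l m x =
      CB3 k l (m + 1) x + CB3 (k + 1) (l - 1) (m + 1) x + CB3 k (l - 1) (m + 1) x
        + CB3 (k - 1) l (m + 1) x + CB3 (k - 1) (l + 1) (m - 1) x
        + CB3 k (l + 1) (m - 1) x + CB3 (k + 1) l (m - 1) x + CB3 k l (m - 1) x := by
  obtain ⟨k, rfl⟩ : ∃ n, k = n + 2 := ⟨k - 2, by omega⟩
  obtain ⟨l, rfl⟩ : ∃ n, l = n + 2 := ⟨l - 2, by omega⟩
  obtain ⟨m, rfl⟩ : ∃ n, m = n + 2 := ⟨m - 2, by omega⟩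
  simp only [CB3_expand, show k+1+2-1 = k+2 from rfl]
  norm_num
  have H := key_S3aux (2*π*((k:ℝ)+2+((l:ℝ)+2)+((m:ℝ)+2)/2)) (2*π*((l:ℝ)+2+((m:ℝ)+2)/2))
    (2*π*(((m:ℝ)+2)/2)) π (x 0) (x 1) (x 2)
  ring_nf at H ⊢
  linear_combination H
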